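/- Spectrum of the Hessian for the Lennard-Jones 2-body problem: Let q₀ = ((0, 1/2), (0, −1/2)) ∈ Ω. Then the Hessian ∇²U(q₀), regarded as a symmetric 4×4 real matrix, has spectrum σ(∇²U(q₀)) = {0, 144}, where the eigenvalue 0 has multiplicity 3 and the eigenvalue 144 has multiplicity 1; equivalently, the characteristic polynomial of ∇²U(q₀) is x³(x − 144). -/

import Mathlib

open Polynomial

/-- Configuration space of two point particles in the plane. -/
noncomputable abbrev LJConf2 := PiLp 2 fun _ : Fin 2 => EuclideanSpace ℝ (Fin 2)

/-- The Lennard-Jones two-body potential `U(q₁,q₂) = ‖q₁ − q₂‖⁻¹² − 2‖q₁ − q₂‖⁻⁶`. -/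
noncomputable def lj2 (q : LJConf2) : ℝ := ‖q 0 - q 1‖ ^ (-12 : ℤ) - 2 * ‖q 0 - q 1‖ ^ (-6 : ℤ)

/-- The configuration `q₀ = ((0, 1/2), (0, −1/2))`. -/
noncomputable def ljq₀ : LJConf2 := WithLp.toLp 2 ![WithLp.toLp 2 ![(0 : ℝ), 1/2], WithLp.toLp 2 ![(0 : ℝ), -1/2]]

/-- The Hessian `∇²U(q₀)` of the Lennard-Jones 2-body potential at `q₀`, as an endomorphism of
the (4-dimensional) configuration space. -/
noncomputable def ljHess : LJConf2 →ₗ[ℝ] LJConf2 := (fderiv ℝ (gradient lj2) ljq₀ : _)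

/-!
Write `U(q) = φ(⟪q, T q⟫)` with `φ(t) = t⁻⁶ − 2t⁻³` and `T q = (q₁ − q₂, q₂ − q₁)`, a symmetric
operator with `⟪q, T q⟫ = ‖q₁ − q₂‖²`. Then `∇U(q) = 2φ'(⟪q, T q⟫) T q`, and at `q₀`, where
`⟪q₀, T q₀⟫ = 1` is the critical point of `φ`, the term `2φ'(1) T` of the second derivative
vanishes: `∇²U(q₀) = 4φ''(1) (T q₀)(T q₀)ᵀ` is a rank-one operator. The characteristic
polynomial of `x yᵀ` on an `n`-dimensional space is `Xⁿ − ⟪y, x⟫ Xⁿ⁻¹`; here `φ''(1) = 18` and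
`‖T q₀‖² = 2` give `X⁴ − 144 X³`.
-/

open Module InnerProductSpace Filter Topology
open scoped RealInnerProductSpace

namespace Polynomial
variable {R : Type*} [CommRing R] [IsDomain R]

theorem X_pow_mul_X_sub_C_ne_zero (n : ℕ) (a : R) : (X ^ n * (X - C a) : R[X]) ≠ 0 :=
  mul_ne_zero (pow_ne_zero n X_ne_zero) (X_sub_C_ne_zero a)

theorem rootMultiplicity_zero_X_pow_mul_X_sub_C {a : R} (ha : a ≠ 0) (n : ℕ) :
    (X ^ n * (X - C a)).rootMultiplicity 0 = n := by
  rw [rootMultiplicity_mul (X_pow_mul_X_sub_C_ne_zero n a),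
    rootMultiplicity_eq_zero (p := X - C a) (by simpa [sub_eq_zero] using ha), add_zero]
  simpa using rootMultiplicity_X_sub_C_pow (0 : R) n

theorem rootMultiplicity_self_X_pow_mul_X_sub_C {a : R} (ha : a ≠ 0) (n : ℕ) :
    (X ^ n * (X - C a)).rootMultiplicity a = 1 := by
  rw [rootMultiplicity_mul (X_pow_mul_X_sub_C_ne_zero n a), rootMultiplicity_X_sub_C_self,
    rootMultiplicity_eq_zero (p := X ^ n) (by simpa using pow_ne_zero n ha), zero_add]

end Polynomial

theorem LinearMap.charpoly_rankOne {𝕜 E : Type*} [RCLike 𝕜] [NormedAddCommGroup E]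
    [InnerProductSpace 𝕜 E] [FiniteDimensional 𝕜 E] (x y : E) :
    (rankOne 𝕜 x y : E →ₗ[𝕜] E).charpoly =
      X ^ finrank 𝕜 E - C (inner 𝕜 y x) * X ^ (finrank 𝕜 E - 1) := by
  let b := stdOrthonormalBasis 𝕜 E
  rw [← LinearMap.charpoly_toMatrix _ b.toBasis, toMatrix_rankOne, Matrix.charpoly_vecMulVec,
    ← b.repr.inner_map_map, EuclideanSpace.inner_eq_star_dotProduct, smul_eq_C_mul, Fintype.card_fin]
  rfl

section QuadraticComposition

variable {E : Type*} [NormedAddCommGroup E] [InnerProductSpace ℝ E] {T : E →L[ℝ] E}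

theorem hasFDerivAt_inner_self_apply (hT : (T : E →ₗ[ℝ] E).IsSymmetric) (q : E) :
    HasFDerivAt (fun p => ⟪p, T p⟫) ((2 : ℝ) • innerSL ℝ (T q)) q := by
  refine ((hasFDerivAt_id q).inner ℝ T.hasFDerivAt).congr_fderiv ?_
  ext v
  have hsymm : ⟪q, T v⟫ = ⟪T q, v⟫ := (hT q v).symm
  simp [fderivInnerCLM_apply, hsymm, real_inner_comm v, two_mul]

variable [CompleteSpace E] {φ : ℝ → ℝ}

theorem hasGradientAt_comp_inner_self_apply (hT : (T : E →ₗ[ℝ] E).IsSymmetric) {q : E} {φ' : ℝ}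
    (hφ : HasDerivAt φ φ' ⟪q, T q⟫) :
    HasGradientAt (fun p => φ ⟪p, T p⟫) ((2 * φ') • T q) q := by
  rw [hasGradientAt_iff_hasFDerivAt]
  refine (hφ.comp_hasFDerivAt q (hasFDerivAt_inner_self_apply hT q)).congr_fderiv ?_
  ext v
  simp
  ring

theorem hasFDerivAt_gradient_comp_inner_self_apply (hT : (T : E →ₗ[ℝ] E).IsSymmetric)
    {ψ : ℝ → ℝ} {ψ' : ℝ} {q₀ : E}
    (hφ : ∀ᶠ q in 𝓝 q₀, HasDerivAt φ (ψ ⟪q, T q⟫) ⟪q, T q⟫)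
    (hψ : HasDerivAt ψ ψ' ⟪q₀, T q₀⟫) (hcrit : ψ ⟪q₀, T q₀⟫ = 0) :
    HasFDerivAt (gradient fun q => φ ⟪q, T q⟫) (rankOne ℝ ((4 * ψ') • T q₀) (T q₀)) q₀ := by
  have hgrad : (gradient fun q => φ ⟪q, T q⟫) =ᶠ[𝓝 q₀] fun q => (2 * ψ ⟪q, T q⟫) • T q :=
    hφ.mono fun q hq => (hasGradientAt_comp_inner_self_apply hT hq).gradient
  have hcoef := (hψ.comp_hasFDerivAt q₀ (hasFDerivAt_inner_self_apply hT q₀)).const_mul 2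
  refine ((hcoef.smul T.hasFDerivAt).congr_fderiv ?_).congr_of_eventuallyEq hgrad
  ext v
  simp [hcrit]
  module

end QuadraticComposition

-- Without this shortcut, the search for this instance through `PiLp` in `fderiv_gradient_lj2_ljq₀`
-- exhausts the heartbeat budget.
instance : ContinuousSMul ℝ LJConf2 := IsBoundedSMul.continuousSMul

noncomputable def particleSwap : LJConf2 ≃ₗᵢ[ℝ] LJConf2 :=
  LinearIsometryEquiv.piLpCongrLeft 2 ℝ (EuclideanSpace ℝ (Fin 2)) (Equiv.swap 0 1)

noncomputable def relDisp : LJConf2 →L[ℝ] LJConf2 :=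
  ContinuousLinearMap.id ℝ LJConf2 - (particleSwap : LJConf2 →L[ℝ] LJConf2)

theorem relDisp_apply (q : LJConf2) : relDisp q = WithLp.toLp 2 ![q 0 - q 1, q 1 - q 0] := by
  ext i : 1
  fin_cases i <;> simp [relDisp, particleSwap, LinearIsometryEquiv.piLpCongrLeft_apply]

theorem inner_relDisp (p q : LJConf2) : ⟪p, relDisp q⟫ = ⟪p 0 - p 1, q 0 - q 1⟫ := by
  simp [relDisp_apply, PiLp.inner_apply, Fin.sum_univ_two]
  ring

theorem relDisp_isSymmetric : (relDisp : LJConf2 →ₗ[ℝ] LJConf2).IsSymmetric := fun p q => by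
  rw [ContinuousLinearMap.coe_coe, real_inner_comm, inner_relDisp, inner_relDisp, real_inner_comm]

noncomputable def ljProfile (t : ℝ) : ℝ := t ^ (-6 : ℤ) - 2 * t ^ (-3 : ℤ)

noncomputable def ljProfileDeriv (t : ℝ) : ℝ := -6 * t ^ (-7 : ℤ) + 6 * t ^ (-4 : ℤ)

theorem lj2_eq_ljProfile_inner_relDisp (q : LJConf2) : lj2 q = ljProfile ⟪q, relDisp q⟫ := by
  have hpow (n : ℤ) : (‖q 0 - q 1‖ ^ 2) ^ n = ‖q 0 - q 1‖ ^ (2 * n) := by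
    rw [← zpow_natCast, ← zpow_mul, Nat.cast_ofNat]
  rw [inner_relDisp, real_inner_self_eq_norm_sq, lj2, ljProfile, hpow, hpow]
  norm_num

theorem hasDerivAt_ljProfile {t : ℝ} (ht : t ≠ 0) : HasDerivAt ljProfile (ljProfileDeriv t) t := by
  show HasDerivAt (fun t => t ^ (-6 : ℤ) - 2 * t ^ (-3 : ℤ)) _ t
  have h6 := hasDerivAt_zpow (-6) t (Or.inl ht)
  have h3 := (hasDerivAt_zpow (-3) t (Or.inl ht)).const_mul 2
  refine (h6.sub h3).congr_deriv ?_
  norm_num [ljProfileDeriv]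
  ring

theorem ljProfileDeriv_one : ljProfileDeriv 1 = 0 := by norm_num [ljProfileDeriv]

theorem hasDerivAt_ljProfileDeriv_one : HasDerivAt ljProfileDeriv 18 1 := by
  show HasDerivAt (fun t => -6 * t ^ (-7 : ℤ) + 6 * t ^ (-4 : ℤ)) 18 1
  have h7 := (hasDerivAt_zpow (-7) (1 : ℝ) (Or.inl one_ne_zero)).const_mul (-6)
  have h4 := (hasDerivAt_zpow (-4) (1 : ℝ) (Or.inl one_ne_zero)).const_mul 6
  exact (h7.add h4).congr_deriv (by norm_num)

theorem relDisp_ljq₀ : relDisp ljq₀ = (2 : ℝ) • ljq₀ := by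
  ext i j
  fin_cases i <;> fin_cases j <;> norm_num [relDisp_apply, ljq₀]

theorem inner_ljq₀_self : ⟪ljq₀, ljq₀⟫ = 1 / 2 := by
  simp [ljq₀, PiLp.norm_sq_eq_of_L2, Fin.sum_univ_two]
  norm_num

theorem inner_ljq₀_relDisp_ljq₀ : ⟪ljq₀, relDisp ljq₀⟫ = 1 := by
  rw [relDisp_ljq₀, real_inner_smul_right, inner_ljq₀_self]
  norm_num

theorem fderiv_gradient_lj2_ljq₀ :
    fderiv ℝ (gradient lj2) ljq₀ = rankOne ℝ ((72 : ℝ) • relDisp ljq₀) (relDisp ljq₀) := by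
  have hq₀ := inner_ljq₀_relDisp_ljq₀
  have hφ : ∀ᶠ q in 𝓝 ljq₀,
      HasDerivAt ljProfile (ljProfileDeriv ⟪q, relDisp q⟫) ⟪q, relDisp q⟫ := by
    have hcont : Continuous fun q : LJConf2 => ⟪q, relDisp q⟫ := by fun_prop
    filter_upwards [hcont.continuousAt.eventually_ne (hq₀ ▸ one_ne_zero)] with q hq
    exact hasDerivAt_ljProfile hq
  have hHess := hasFDerivAt_gradient_comp_inner_self_apply relDisp_isSymmetric hφ
    (hq₀ ▸ hasDerivAt_ljProfileDeriv_one) (hq₀ ▸ ljProfileDeriv_one)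
  rw [funext lj2_eq_ljProfile_inner_relDisp, hHess.fderiv]
  norm_num

theorem charpoly_ljHess : LinearMap.charpoly ljHess = X ^ 3 * (X - C 144) := by
  have hdim : finrank ℝ LJConf2 = 4 := by
    rw [(WithLp.linearEquiv 2 ℝ _).finrank_eq]
    simp [Module.finrank_pi_fintype]
  rw [ljHess, fderiv_gradient_lj2_ljq₀, LinearMap.charpoly_rankOne, hdim, real_inner_smul_right,
    relDisp_ljq₀, real_inner_smul_left, real_inner_smul_right, inner_ljq₀_self]
  norm_num
  ring

/-- **Spectrum of the Hessian for the Lennard-Jones 2-body problem.**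
At `q₀ = ((0,1/2),(0,−1/2))` the Hessian `∇²U(q₀)` has spectrum `{0, 144}`, with eigenvalue `0`
of multiplicity `3` and eigenvalue `144` of multiplicity `1`; equivalently its characteristic
polynomial is `x³(x − 144)`. -/
theorem lennard_jones_two_body_hessian_spectrum :
    spectrum ℝ ljHess = {0, 144} ∧
    LinearMap.charpoly ljHess = X ^ 3 * (X - C 144) ∧
    (LinearMap.charpoly ljHess).rootMultiplicity 0 = 3 ∧
    (LinearMap.charpoly ljHess).rootMultiplicity 144 = 1 := by
  refine ⟨?_, charpoly_ljHess, ?_, ?_⟩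
  · ext μ
    rw [Module.End.mem_spectrum_iff_isRoot_charpoly, charpoly_ljHess]
    simp [sub_eq_zero]
  · rw [charpoly_ljHess]
    exact rootMultiplicity_zero_X_pow_mul_X_sub_C (by norm_num) 3
  · rw [charpoly_ljHess]
    exact rootMultiplicity_self_X_pow_mul_X_sub_C (by norm_num) 3
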